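/- arXiv:2406.11316 — 3 statements merged into one kernel-verified Lean document; each statement's English description precedes it below -/
import Mathlib

section
/- Let ξ be a real random variable with |ξ| ≤ B_ξ almost surely, E[ξ] = 0, and let y = g + ξ for a constant g with |g| ≤ B_g. Set B_y = B_g + B_ξ. If p is drawn uniformly from [-B_y, B_y] independently of ξ, and o = 1{p ≤ y}, then E[2·B_y·(o - 1/2)] = g. -/
/-!
For a fixed valuation `y ∈ [-B, B]` and a price `p` uniform on `[-B, B]`, the purchase
probability `P(p ≤ y) = (y + B) / (2B)` is affine in `y`, so `2B (1{p ≤ y} - 1/2)` has mean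
exactly `y`. Integrating first over the price (Fubini) and then over the noise gives
`E[g + ξ] = g`.
-/

open MeasureTheory ProbabilityTheory Set

/-- The estimate of the valuation `y` read off the purchase decision at price `p`. -/
noncomputable def binaryEstimate (B p y : ℝ) : ℝ :=
  2 * B * ((if p ≤ y then 1 else 0) - 1 / 2)

lemma binaryEstimate_eq_indicator (B p y : ℝ) :
    binaryEstimate B p y = 2 * B * (Iic y).indicator 1 p - B := by
  by_cases h : p ≤ y <;>
    simp only [binaryEstimate, indicator, mem_Iic, Pi.one_apply, h, if_true, if_false] <;> ring

lemma isProbabilityMeasure_cond_Icc {a b : ℝ} (hab : a < b) :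
    IsProbabilityMeasure (volume[|Icc a b]) :=
  cond_isProbabilityMeasure_of_finite (by simpa using hab) (by simp)

lemma measureReal_cond_Icc_Iic {a b y : ℝ} (hab : a < b) (hy : y ∈ Icc a b) :
    (volume[|Icc a b]).real (Iic y) = (y - a) / (b - a) := by
  have hIcc : Icc a b ∩ Iic y = Icc a y := by
    ext p
    simp only [mem_inter_iff, mem_Icc, mem_Iic]
    exact ⟨fun h => ⟨h.1.1, h.2⟩, fun h => ⟨⟨h.1, h.2.trans hy.2⟩, h.2⟩⟩
  rw [measureReal_def, cond_apply measurableSet_Icc, hIcc, Real.volume_Icc, Real.volume_Icc,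
    ENNReal.toReal_mul, ENNReal.toReal_inv, ENNReal.toReal_ofReal (sub_nonneg.2 hab.le),
    ENNReal.toReal_ofReal (sub_nonneg.2 hy.1), div_eq_inv_mul]

lemma integral_binaryEstimate_cond_Icc {B y : ℝ} (hB : 0 < B) (hy : |y| ≤ B) :
    ∫ p, binaryEstimate B p y ∂volume[|Icc (-B) B] = y := by
  have := isProbabilityMeasure_cond_Icc (neg_lt_self hB)
  have hind : Integrable ((Iic y).indicator (1 : ℝ → ℝ)) (volume[|Icc (-B) B]) :=
    (integrable_const (1 : ℝ)).indicator measurableSet_Iic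
  simp_rw [binaryEstimate_eq_indicator]
  rw [integral_sub (hind.const_mul _) (integrable_const B), integral_const_mul,
    integral_indicator_one measurableSet_Iic,
    measureReal_cond_Icc_Iic (neg_lt_self hB) (abs_le.1 hy), integral_const, probReal_univ,
    one_smul]
  field_simp
  ring

lemma abs_binaryEstimate_le {B : ℝ} (hB : 0 ≤ B) (p y : ℝ) : |binaryEstimate B p y| ≤ B := by
  unfold binaryEstimate
  split_ifs <;> norm_num [abs_of_nonneg hB] <;> linarith

lemma integral_prod_binaryEstimate_cond_Icc {Ω : Type*} [MeasurableSpace Ω] (P : Measure Ω)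
    [IsProbabilityMeasure P] {Y : Ω → ℝ} (hY : Measurable Y) {B : ℝ} (hB : 0 < B)
    (hYB : ∀ᵐ ω ∂P, |Y ω| ≤ B) :
    ∫ q, binaryEstimate B q.1 (Y q.2) ∂(volume[|Icc (-B) B]).prod P = ∫ ω, Y ω ∂P := by
  have := isProbabilityMeasure_cond_Icc (neg_lt_self hB)
  have hmeas : Measurable fun q : ℝ × Ω => binaryEstimate B q.1 (Y q.2) :=
    ((measurable_const.ite (measurableSet_le measurable_fst (hY.comp measurable_snd))
      measurable_const).sub_const _).const_mul _
  have hint : Integrable (fun q : ℝ × Ω => binaryEstimate B q.1 (Y q.2))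
      ((volume[|Icc (-B) B]).prod P) :=
    .of_bound hmeas.aestronglyMeasurable B (.of_forall fun q => abs_binaryEstimate_le hB.le _ _)
  rw [integral_prod_symm _ hint]
  exact integral_congr_ae (hYB.mono fun ω hω => integral_binaryEstimate_cond_Icc hB hω)

theorem stmt0_general {Ω : Type*} [MeasurableSpace Ω] (P : Measure Ω) [IsProbabilityMeasure P]
    (ξ : Ω → ℝ) (hξmeas : Measurable ξ)
    (Bξ Bg g : ℝ) (hBξ : 0 < Bξ)
    (hbound : ∀ᵐ ω ∂P, |ξ ω| ≤ Bξ)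
    (hmean : ∫ ω, ξ ω ∂P = 0)
    (hg : |g| ≤ Bg) :
    ∫ q, 2 * (Bg + Bξ) * ((if q.1 ≤ g + ξ q.2 then (1 : ℝ) else 0) - 1 / 2)
        ∂(((ENNReal.ofReal (2 * (Bg + Bξ)))⁻¹ •
            (volume.restrict (Icc (-(Bg + Bξ)) (Bg + Bξ)))).prod P) = g := by
  have hB : 0 < Bg + Bξ := by linarith [(abs_nonneg g).trans hg]
  have hunif : (ENNReal.ofReal (2 * (Bg + Bξ)))⁻¹ • volume.restrict (Icc (-(Bg + Bξ)) (Bg + Bξ))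
      = volume[|Icc (-(Bg + Bξ)) (Bg + Bξ)] := by
    rw [ProbabilityTheory.cond, Real.volume_Icc, sub_neg_eq_add, two_mul]
  have hyB : ∀ᵐ ω ∂P, |g + ξ ω| ≤ Bg + Bξ :=
    hbound.mono fun ω hω => (abs_add_le _ _).trans (add_le_add hg hω)
  have hξint : Integrable ξ P := .of_bound hξmeas.aestronglyMeasurable Bξ hbound
  rw [hunif]
  calc _ = ∫ ω, g + ξ ω ∂P :=
        integral_prod_binaryEstimate_cond_Icc P (measurable_const.add hξmeas) hB hyB
    _ = g := by
      rw [integral_add (integrable_const g) hξint, hmean, integral_const, probReal_univ,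
        one_smul, add_zero]

/-- Uniform-price unbiased valuation estimator: if the price `p` is drawn uniformly on
`[-B_y, B_y]` (with `B_y = B_g + B_ξ`) independently of the noise `ξ`, then
`E[2 B_y (o - 1/2)] = g`, where `o = 1{p ≤ g + ξ}`. -/
theorem stmt0 {Ω : Type*} [MeasurableSpace Ω] (P : Measure Ω) [IsProbabilityMeasure P]
    (ξ : Ω → ℝ) (hξmeas : Measurable ξ)
    (Bξ Bg g : ℝ) (hBg : 0 ≤ Bg) (hBξ : 0 < Bξ)
    (hbound : ∀ᵐ ω ∂P, |ξ ω| ≤ Bξ)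
    (hmean : ∫ ω, ξ ω ∂P = 0)
    (hg : |g| ≤ Bg) :
    ∫ q, 2 * (Bg + Bξ) * ((if q.1 ≤ g + ξ q.2 then (1 : ℝ) else 0) - 1 / 2)
        ∂(((ENNReal.ofReal (2 * (Bg + Bξ)))⁻¹ •
            (volume.restrict (Icc (-(Bg + Bξ)) (Bg + Bξ)))).prod P) = g :=
  stmt0_general P ξ hξmeas Bξ Bg g hBξ hbound hmean hg
end

section
/- Let (F_t) be a filtration and (y_t) adapted real random variables with y_t - E[y_t | F_{t-1}] ∈ [m, M] almost surely. Let ι_t ∈ {0,1} be F_{t-1}-measurable, N_t = Σ_{s ≤ t} ι_s, and Z_t = Σ_{s ≤ t} ι_s (y_s - E[y_s | F_{s-1}]). Then for any fixed x ∈ ℝ, the process M_t = exp(x·Z_t - x²(M - m)²·N_t/8) is a supermartingale with respect to (F_t). -/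
open MeasureTheory ProbabilityTheory Real

/-!
Conditional Hoeffding lemma: since `exp (x ·)` is convex, on `[m, M]` it lies below its chord,
which is affine; conditioning a centered `d` therefore bounds `E[exp (x d) | 𝒢]` by the value of
the chord at `0`. That value is the moment generating function of the centered two-point law on
`{m, M}`, which the unconditional Hoeffding lemma bounds by `exp (x² (M - m)² / 8)`.

The increment of `log M_t` from `t` to `t + 1` is `ι_{t+1} (x D_t - x² (M - m)² / 8)` with
`D_t` the martingale difference. Since `ι_{t+1} ∈ {0, 1}` is known at time `t`, the conditional
expectation of its exponential is either `1` or, by the conditional Hoeffding lemma, at most `1`.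
-/

lemma exp_mul_le_chord {m M d : ℝ} (hd : d ∈ Set.Icc m M) (hmM : m < M) (x : ℝ) :
    exp (x * d) ≤ (M * exp (x * m) - m * exp (x * M)) / (M - m)
      + (exp (x * M) - exp (x * m)) / (M - m) * d := by
  have hpos : 0 < M - m := by linarith
  have hconv := convexOn_exp.2 (Set.mem_univ (x * m)) (Set.mem_univ (x * M))
    (div_nonneg (sub_nonneg.2 hd.2) hpos.le) (div_nonneg (sub_nonneg.2 hd.1) hpos.le)
    (by field_simp; ring)
  simp only [smul_eq_mul] at hconv
  have hpoint : (M - d) / (M - m) * (x * m) + (d - m) / (M - m) * (x * M) = x * d := by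
    rw [div_mul_eq_mul_div, div_mul_eq_mul_div, ← add_div, div_eq_iff hpos.ne']; ring
  rw [hpoint] at hconv
  refine hconv.trans_eq ?_
  field_simp
  ring

lemma exp_chord_at_zero_le {m M : ℝ} (hm : m ≤ 0) (hM : 0 ≤ M) (hmM : m < M) (x : ℝ) :
    (M * exp (x * m) - m * exp (x * M)) / (M - m) ≤ exp (x ^ 2 * (M - m) ^ 2 / 8) := by
  have hpos : 0 < M - m := by linarith
  set p : ℝ := M / (M - m)
  set q : ℝ := -m / (M - m)
  have hp : 0 ≤ p := div_nonneg hM hpos.le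
  have hq : 0 ≤ q := div_nonneg (neg_nonneg.2 hm) hpos.le
  have hpq : p + q = 1 := by rw [← add_div, div_eq_one_iff_eq hpos.ne']; ring
  set ν : Measure ℝ := ENNReal.ofReal p • Measure.dirac m + ENNReal.ofReal q • Measure.dirac M
  have : IsProbabilityMeasure ν := ⟨by simp [ν, ← ENNReal.ofReal_add hp hq, hpq]⟩
  have hν_integral (f : ℝ → ℝ) : ∫ y, f y ∂ν = p * f m + q * f M := by
    rw [integral_add_measure, integral_smul_measure, integral_smul_measure, integral_dirac,
      integral_dirac, ENNReal.toReal_ofReal hp, ENNReal.toReal_ofReal hq, smul_eq_mul, smul_eq_mul]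
    · exact (integrable_dirac enorm_lt_top).smul_measure ENNReal.ofReal_ne_top
    · exact (integrable_dirac enorm_lt_top).smul_measure ENNReal.ofReal_ne_top
  have hν_support : ∀ᵐ y ∂ν, y ∈ Set.Icc m M := by
    rw [ae_add_measure_iff]
    constructor <;> refine Measure.ae_smul_measure ?_ _ <;> simp [ae_dirac_eq, hmM.le]
  have hν_centered : ∫ y, id y ∂ν = 0 := by
    rw [hν_integral]; simp only [p, q, id]; field_simp; ring
  have hoeffding := (hasSubgaussianMGF_of_mem_Icc_of_integral_eq_zero aemeasurable_id
    hν_support hν_centered).mgf_le x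
  rw [mgf, hν_integral] at hoeffding
  convert hoeffding using 2
  · simp only [p, q, id]; field_simp; ring
  · simp [abs_of_pos hpos]; ring

theorem condExp_exp_mul_le_of_mem_Icc {Ω : Type*} {𝒢 m0 : MeasurableSpace Ω} {μ : Measure Ω}
    [IsProbabilityMeasure μ] (h𝒢 : 𝒢 ≤ m0) {d : Ω → ℝ} {m M : ℝ} (hd : AEMeasurable d μ)
    (hb : ∀ᵐ ω ∂μ, d ω ∈ Set.Icc m M) (hc : μ[d|𝒢] =ᵐ[μ] 0) (x : ℝ) :
    μ[fun ω => exp (x * d ω)|𝒢] ≤ᵐ[μ] fun _ => exp (x ^ 2 * (M - m) ^ 2 / 8) := by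
  have hd_int := Integrable.of_mem_Icc m M hd hb
  have hmean : ∫ ω, d ω ∂μ = 0 := by
    rw [← integral_condExp h𝒢, integral_congr_ae hc]; simp
  have hm : m ≤ 0 := by
    simpa [hmean] using integral_mono_ae (integrable_const m) hd_int (hb.mono fun _ h => h.1)
  have hM : 0 ≤ M := by
    simpa [hmean] using integral_mono_ae hd_int (integrable_const M) (hb.mono fun _ h => h.2)
  obtain hmM | hmM := (hm.trans hM).eq_or_lt
  · have hexp_one : (fun ω => exp (x * d ω)) =ᵐ[μ] fun _ => 1 := by
      filter_upwards [hb] with ω hω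
      rw [show d ω = 0 by linarith [hω.1, hω.2], mul_zero, exp_zero]
    filter_upwards [condExp_congr_ae (m := 𝒢) hexp_one] with ω hω
    rw [hω, condExp_const h𝒢]
    exact one_le_exp (by positivity)
  set a := (M * exp (x * m) - m * exp (x * M)) / (M - m)
  set b := (exp (x * M) - exp (x * m)) / (M - m)
  have hchord : (fun ω => exp (x * d ω)) ≤ᵐ[μ] fun ω => a + b * d ω := by
    filter_upwards [hb] with ω hω using exp_mul_le_chord hω hmM x
  have hchord_condExp : μ[fun ω => a + b * d ω|𝒢] =ᵐ[μ] fun _ => a := by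
    filter_upwards [condExp_add (integrable_const a) (hd_int.smul b) 𝒢,
      condExp_smul (m := 𝒢) b d, hc] with ω hadd hsmul hω
    rw [show (fun ω => a + b * d ω) = (fun _ => a) + b • d from rfl, hadd, Pi.add_apply,
      condExp_const h𝒢, hsmul, Pi.smul_apply, hω]
    simp
  filter_upwards [condExp_mono (m := 𝒢) (integrable_exp_mul_of_mem_Icc hd hb)
    (integrable_const a |>.add (hd_int.const_mul b)) hchord, hchord_condExp] with ω hle heq
  exact (hle.trans_eq heq).trans (exp_chord_at_zero_le hm hM hmM x)

lemma condExp_sub_condExp_ae_eq_zero {Ω : Type*} {𝒢 m0 : MeasurableSpace Ω} {μ : Measure Ω}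
    (h𝒢 : 𝒢 ≤ m0) [SigmaFinite (μ.trim h𝒢)] {f : Ω → ℝ} (hf : Integrable f μ) :
    μ[f - μ[f|𝒢]|𝒢] =ᵐ[μ] 0 := by
  filter_upwards [condExp_sub hf integrable_condExp 𝒢] with ω hω
  rw [hω, Pi.sub_apply,
    condExp_of_stronglyMeasurable h𝒢 stronglyMeasurable_condExp integrable_condExp, sub_self,
    Pi.zero_apply]

lemma norm_exp_mul_sub_le {ι u c : ℝ} (hι : ι = 0 ∨ ι = 1) (hc : 0 ≤ c) :
    ‖exp (ι * (u - c))‖ ≤ exp |u| := by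
  rw [norm_of_nonneg (exp_pos _).le, exp_le_exp]
  rcases hι with rfl | rfl
  · simp
  · linarith [le_abs_self u]

lemma condExp_exp_mul_sub_le_one {Ω : Type*} {𝒢 m0 : MeasurableSpace Ω} {μ : Measure Ω}
    [IsFiniteMeasure μ] (h𝒢 : 𝒢 ≤ m0) {ι u : Ω → ℝ} {c : ℝ} (hι : StronglyMeasurable[𝒢] ι)
    (hι01 : ∀ ω, ι ω = 0 ∨ ι ω = 1) (hu : Integrable (fun ω => exp (u ω)) μ)
    (hle : μ[fun ω => exp (u ω)|𝒢] ≤ᵐ[μ] fun _ => exp c) :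
    μ[fun ω => exp (ι ω * (u ω - c))|𝒢] ≤ᵐ[μ] 1 := by
  have hsplit : (fun ω => exp (ι ω * (u ω - c)))
      = (fun ω => ι ω * exp (-c)) * (fun ω => exp (u ω)) + fun ω => 1 - ι ω := by
    ext ω
    rcases hι01 ω with h | h <;> simp [h, ← exp_add, sub_eq_neg_add]
  have hweight : StronglyMeasurable[𝒢] fun ω => ι ω * exp (-c) := hι.mul_const _
  have hprod_int : Integrable ((fun ω => ι ω * exp (-c)) * fun ω => exp (u ω)) μ :=
    hu.bdd_mul (c := exp (-c)) (hweight.mono h𝒢).aestronglyMeasurable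
      (ae_of_all _ fun ω => by rcases hι01 ω with h | h <;> simp [h, (exp_pos _).le])
  have hcompl_meas : StronglyMeasurable[𝒢] fun ω => 1 - ι ω := stronglyMeasurable_const.sub hι
  have hcompl_int : Integrable (fun ω => 1 - ι ω) μ :=
    Integrable.of_mem_Icc 0 1 (hcompl_meas.mono h𝒢).aemeasurable
      (ae_of_all _ fun ω => by rcases hι01 ω with h | h <;> simp [h])
  rw [hsplit]
  filter_upwards [condExp_add hprod_int hcompl_int 𝒢,
    condExp_mul_of_stronglyMeasurable_left hweight hprod_int hu, hle] with ω hadd hmul hω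
  rw [hadd, Pi.add_apply, hmul, condExp_of_stronglyMeasurable h𝒢 hcompl_meas hcompl_int]
  simp only [Pi.mul_apply, Pi.one_apply]
  rcases hι01 ω with h | h
  · simp [h]
  · rw [h, one_mul, sub_self, add_zero, exp_neg, inv_mul_le_one₀ (exp_pos c)]
    exact hω

lemma supermartingale_of_eq_mul {Ω : Type*} {m0 : MeasurableSpace Ω} {μ : Measure Ω}
    [IsFiniteMeasure μ] {F : Filtration ℕ m0} {f g : ℕ → Ω → ℝ}
    (hf0 : StronglyMeasurable[F 0] (f 0)) (hf0_int : Integrable (f 0) μ)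
    (hf_nonneg : ∀ t, 0 ≤ᵐ[μ] f t) (hg : ∀ t, StronglyMeasurable[F (t + 1)] (g t))
    (hg_bdd : ∀ t, ∃ C, ∀ᵐ ω ∂μ, ‖g t ω‖ ≤ C) (hfg : ∀ t, f (t + 1) = f t * g t)
    (hg_le : ∀ t, μ[g t|F t] ≤ᵐ[μ] 1) : Supermartingale f F μ := by
  have hadapted : StronglyAdapted F f := by
    intro t
    induction t with
    | zero => exact hf0
    | succ t ih => rw [hfg]; exact (ih.mono (F.mono t.le_succ)).mul (hg t)
  have hint : ∀ t, Integrable (f t) μ := by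
    intro t
    induction t with
    | zero => exact hf0_int
    | succ t ih =>
      obtain ⟨C, hC⟩ := hg_bdd t
      rw [hfg]
      exact ih.mul_bdd ((hg t).mono (F.le _)).aestronglyMeasurable hC
  refine supermartingale_nat hadapted hint fun t => ?_
  obtain ⟨C, hC⟩ := hg_bdd t
  have hg_int : Integrable (g t) μ := .of_bound ((hg t).mono (F.le _)).aestronglyMeasurable C hC
  have hfg_int : Integrable (f t * g t) μ := hfg t ▸ hint (t + 1)
  rw [hfg]
  filter_upwards [condExp_mul_of_stronglyMeasurable_left (hadapted t) hfg_int hg_int, hg_le t,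
    hf_nonneg t] with ω hmul hle hnonneg
  rw [hmul, Pi.mul_apply]
  exact mul_le_of_le_one_right hnonneg hle

/-- Exponential supermartingale for optionally-sampled bounded martingale differences:
`M_t = exp(x Z_t - x² (M - m)² N_t / 8)` is a supermartingale. -/
theorem stmt5 {Ω : Type*} {m0 : MeasurableSpace Ω} (μ : Measure Ω) [IsProbabilityMeasure μ]
    (F : Filtration ℕ m0) (y ι : ℕ → Ω → ℝ) (m M : ℝ)
    (hy_adapted : ∀ s : ℕ, StronglyMeasurable[F (s + 1)] (y (s + 1)))
    (hy_int : ∀ s : ℕ, Integrable (y s) μ)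
    (hbound : ∀ s : ℕ, ∀ᵐ ω ∂μ,
      y (s + 1) ω - (μ[y (s + 1)|F s]) ω ∈ Set.Icc m M)
    (hι_meas : ∀ s : ℕ, StronglyMeasurable[F s] (ι (s + 1)))
    (hι_01 : ∀ (s : ℕ) (ω : Ω), ι (s + 1) ω = 0 ∨ ι (s + 1) ω = 1)
    (x : ℝ) :
    Supermartingale
      (fun t ω => Real.exp (x * (∑ s ∈ Finset.range t,
          ι (s + 1) ω * (y (s + 1) ω - (μ[y (s + 1)|F s]) ω))
        - x ^ 2 * (M - m) ^ 2 * (∑ s ∈ Finset.range t, ι (s + 1) ω) / 8)) F μ := by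
  set K := x ^ 2 * (M - m) ^ 2 / 8
  set D : ℕ → Ω → ℝ := fun s ω => y (s + 1) ω - (μ[y (s + 1)|F s]) ω
  have hD_meas (s : ℕ) : StronglyMeasurable[F (s + 1)] (D s) :=
    (hy_adapted s).sub (stronglyMeasurable_condExp.mono (F.mono s.le_succ))
  have hD_centered (s : ℕ) : μ[D s|F s] =ᵐ[μ] 0 :=
    condExp_sub_condExp_ae_eq_zero (F.le s) (hy_int (s + 1))
  have hD_aemeas (s : ℕ) : AEMeasurable (D s) μ := ((hD_meas s).mono (F.le _)).aemeasurable
  have hg_le (t : ℕ) : μ[fun ω => exp (ι (t + 1) ω * (x * D t ω - K))|F t] ≤ᵐ[μ] 1 :=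
    condExp_exp_mul_sub_le_one (F.le t) (hι_meas t) (hι_01 t)
      (integrable_exp_mul_of_mem_Icc (hD_aemeas t) (hbound t))
      (condExp_exp_mul_le_of_mem_Icc (F.le t) (hD_aemeas t) (hbound t) (hD_centered t) x)
  have hg_bdd (t : ℕ) :
      ∀ᵐ ω ∂μ, ‖exp (ι (t + 1) ω * (x * D t ω - K))‖ ≤ exp (|x| * max |m| |M|) := by
    filter_upwards [hbound t] with ω hω
    refine (norm_exp_mul_sub_le (hι_01 t ω) (by positivity)).trans (exp_le_exp.2 ?_)
    rw [abs_mul]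
    gcongr
    exact abs_le_max_abs_abs hω.1 hω.2
  refine supermartingale_of_eq_mul (g := fun t ω => exp (ι (t + 1) ω * (x * D t ω - K)))
    (by simp [stronglyMeasurable_const]) (by simp)
    (fun t => ae_of_all _ fun ω => (exp_pos _).le)
    (fun t => continuous_exp.comp_stronglyMeasurable <| ((hι_meas t).mono (F.mono t.le_succ)).mul
      (((hD_meas t).const_mul x).sub stronglyMeasurable_const))
    (fun t => ⟨_, hg_bdd t⟩) (fun t => ?_) hg_le
  ext ω
  simp only [Finset.sum_range_succ, Pi.mul_apply, ← exp_add, D, K]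
  ring_nf
end

section
/- Let (F_t) be a filtration, (y_t) adapted with y_t - E[y_t | F_{t-1}] ∈ [m, M] a.s., ι_t ∈ {0,1} F_{t-1}-measurable, N_t = Σ_{s ≤ t} ι_s, and μ̂_t = (Σ_{s ≤ t} ι_s(y_s - E[y_s|F_{s-1}]))/N_t when N_t ≥ 1. Then for any t ∈ ℕ and α ∈ (0,1): P(N_t = 0 or |μ̂_t| ≤ (M - m)·√(log(1/α)/(2·N_t))) ≥ 1 - 2tα. -/
/-!
Write `S_t` for the sampled sum of the increments and `N_t` for the number of samples. For every
`l`, the process `exp (l S_t - l² (b - a)² N_t / 8)` is a product of factors whose conditional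
expectation given the past is at most `1`: an unsampled factor is `1`, and a sampled one is
controlled by the conditional Hoeffding lemma. So its expectation is at most `1`, and on the
event `N_t = k` the Chernoff bound with the optimal `l` gives Hoeffding's tail
`exp (-2c² / (k (b - a)²))` for a fixed sample count. With `c` chosen so that this tail equals
`α`, a union bound over `k = 1, …, t` and over both signs (the lower tail is the upper tail of
`-X`) costs `2tα`.
-/

open MeasureTheory ProbabilityTheory Real Finset

lemma exp_mul_le_chord_s7 {a b x : ℝ} (hab : a < b) (hx : x ∈ Set.Icc a b) (l : ℝ) :
    exp (l * x) ≤ (b * exp (l * a) - a * exp (l * b)) / (b - a)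
      + (exp (l * b) - exp (l * a)) / (b - a) * x := by
  have hba : 0 < b - a := sub_pos.2 hab
  have key := convexOn_exp.2 (Set.mem_univ (l * a)) (Set.mem_univ (l * b))
    (div_nonneg (sub_nonneg.2 hx.2) hba.le) (div_nonneg (sub_nonneg.2 hx.1) hba.le)
    (by field_simp; ring)
  have harg : (b - x) / (b - a) * (l * a) + (x - a) / (b - a) * (l * b) = l * x := by
    field_simp; ring
  simp only [smul_eq_mul, harg] at key
  exact key.trans_eq (by field_simp; ring)

-- The left side is the mgf at `l` of the law on `{a, b}` with mean zero, so this is Hoeffding's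
-- lemma for that law.
lemma chord_exp_mul_at_zero_le {a b : ℝ} (ha : a ≤ 0) (hb : 0 ≤ b) (hab : a < b) (l : ℝ) :
    (b * exp (l * a) - a * exp (l * b)) / (b - a) ≤ exp (l ^ 2 * (b - a) ^ 2 / 8) := by
  have hba : 0 < b - a := sub_pos.2 hab
  let p : unitInterval := ⟨-a / (b - a), div_nonneg (neg_nonneg.2 ha) hba.le,
    (div_le_one hba).2 (by linarith)⟩
  have hmem : ∀ᵐ x ∂Ber(b, a, p), x ∈ Set.Icc a b := by
    rw [ae_iff]
    apply bernoulliMeasure_apply_of_notMem_of_notMem p measurableSet_Icc.compl <;> simp [hab.le]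
  have hmean : Ber(b, a, p)[id] = 0 := by
    simp only [integral_bernoulliMeasure, p, id, smul_eq_mul]
    field_simp; ring
  have hmgf : mgf id Ber(b, a, p) l = (b * exp (l * a) - a * exp (l * b)) / (b - a) := by
    simp only [mgf, integral_bernoulliMeasure, p, id, smul_eq_mul]
    field_simp; ring
  calc _ = mgf id Ber(b, a, p) l := hmgf.symm
    _ ≤ _ := (hasSubgaussianMGF_of_mem_Icc_of_integral_eq_zero aemeasurable_id hmem hmean).mgf_le l
    _ = _ := by
      congr 1
      simp only [NNReal.coe_pow, NNReal.coe_div, coe_nnnorm, norm_eq_abs, abs_of_pos hba,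
        NNReal.coe_ofNat]
      ring

section Conditional

variable {Ω : Type*} {G m0 : MeasurableSpace Ω} {μ : Measure Ω}

lemma zero_mem_Icc_of_condExp_eq_zero [IsProbabilityMeasure μ] (hG : G ≤ m0) {X : Ω → ℝ}
    {a b : ℝ} (hX : Integrable X μ) (hXG : μ[X|G] =ᵐ[μ] 0)
    (hXab : ∀ᵐ ω ∂μ, X ω ∈ Set.Icc a b) : (0 : ℝ) ∈ Set.Icc a b := by
  have hmean : ∫ ω, X ω ∂μ = 0 := by
    rw [← integral_condExp hG, integral_congr_ae hXG]
    simp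
  rw [← hmean]
  constructor
  · simpa using integral_mono_ae (integrable_const a) hX (hXab.mono fun _ h => h.1)
  · simpa using integral_mono_ae hX (integrable_const b) (hXab.mono fun _ h => h.2)

-- Conditional Hoeffding lemma: `exp (l * X)` lies below its chord over `[a, b]`, an affine
-- function of `X` whose conditional expectation is the chord's value at `0`.
lemma condExp_exp_mul_sub_le_one_s7 [IsProbabilityMeasure μ] (hG : G ≤ m0) {X : Ω → ℝ}
    {a b : ℝ} (hab : a < b) (hX : Integrable X μ) (hXG : μ[X|G] =ᵐ[μ] 0)
    (hXab : ∀ᵐ ω ∂μ, X ω ∈ Set.Icc a b) (l : ℝ) :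
    μ[fun ω => exp (l * X ω - l ^ 2 * (b - a) ^ 2 / 8)|G] ≤ᵐ[μ] 1 := by
  obtain ⟨ha, hb⟩ := zero_mem_Icc_of_condExp_eq_zero hG hX hXG hXab
  set c := l ^ 2 * (b - a) ^ 2 / 8
  set p := (b * exp (l * a) - a * exp (l * b)) / (b - a)
  set q := (exp (l * b) - exp (l * a)) / (b - a)
  have hexp : ∀ ω, exp (l * X ω - c) = exp (-c) * exp (l * X ω) := fun ω => by
    rw [← exp_add]; ring_nf
  have hint : Integrable (fun ω => exp (l * X ω - c)) μ := by
    simpa only [hexp] using (integrable_exp_mul_of_mem_Icc hX.aemeasurable hXab).const_mul _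
  have hchord : (fun ω => exp (l * X ω - c)) ≤ᵐ[μ] fun ω => exp (-c) * p + exp (-c) * q * X ω := by
    filter_upwards [hXab] with ω hω
    rw [hexp, mul_assoc, ← mul_add]
    exact mul_le_mul_of_nonneg_left (exp_mul_le_chord_s7 hab hω l) (exp_pos _).le
  have hlin : μ[fun ω => exp (-c) * q * X ω|G] =ᵐ[μ] fun ω => exp (-c) * q * (μ[X|G]) ω :=
    condExp_smul (μ := μ) (exp (-c) * q) X G
  filter_upwards [condExp_mono hint ((integrable_const _).add (hX.const_mul _)) hchord,
    condExp_add (integrable_const (exp (-c) * p)) (hX.const_mul (exp (-c) * q)) G,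
    hlin, hXG] with ω h1 h2 h3 h4
  rw [h2, Pi.add_apply, condExp_const hG, h3, h4] at h1
  refine h1.trans ?_
  simp only [Pi.zero_apply, mul_zero, add_zero, Pi.one_apply]
  calc exp (-c) * p ≤ exp (-c) * exp c := by gcongr; exact chord_exp_mul_at_zero_le ha hb hab l
    _ = 1 := by rw [← exp_add]; simp

lemma condExp_exp_mul_le_one_of_eq_zero_or_one [IsFiniteMeasure μ] (hG : G ≤ m0)
    {ι u : Ω → ℝ} (hι : StronglyMeasurable[G] ι) (hι01 : ∀ ω, ι ω = 0 ∨ ι ω = 1)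
    (hu : Integrable (fun ω => exp (u ω)) μ) (hcond : μ[fun ω => exp (u ω)|G] ≤ᵐ[μ] 1) :
    μ[fun ω => exp (ι ω * u ω)|G] ≤ᵐ[μ] 1 := by
  have hι_bdd : ∀ᵐ ω ∂μ, ‖ι ω‖ ≤ 1 := ae_of_all _ fun ω => by rcases hι01 ω with h | h <;> simp [h]
  have hι_int : Integrable ι μ := .of_bound (hι.mono hG).aestronglyMeasurable 1 hι_bdd
  have hint : Integrable (ι * fun ω => exp (u ω)) μ :=
    hu.bdd_mul (hι.mono hG).aestronglyMeasurable hι_bdd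
  have hsplit : (fun ω => exp (ι ω * u ω)) = (fun ω => 1 - ι ω) + ι * fun ω => exp (u ω) := by
    ext ω; rcases hι01 ω with h | h <;> simp [h]
  have hone : Integrable (fun ω => 1 - ι ω) μ := (integrable_const 1).sub hι_int
  have hfix : μ[fun ω => 1 - ι ω|G] = fun ω => 1 - ι ω :=
    condExp_of_stronglyMeasurable hG (stronglyMeasurable_const.sub hι) hone
  rw [hsplit]
  filter_upwards [condExp_add hone hint G,
    condExp_mul_of_stronglyMeasurable_left hι hint hu, hcond] with ω h1 h2 h3
  rw [h1, Pi.add_apply, hfix, h2, Pi.mul_apply]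
  rcases hι01 ω with h | h <;> simp_all

lemma integral_mul_le_of_condExp_le_one [IsFiniteMeasure μ] (hG : G ≤ m0) {Z g : Ω → ℝ}
    (hZ : StronglyMeasurable[G] Z) (hZ0 : 0 ≤ᵐ[μ] Z) (hZi : Integrable Z μ)
    (hg : Integrable g μ) (hZg : Integrable (Z * g) μ) (hcond : μ[g|G] ≤ᵐ[μ] 1) :
    ∫ ω, (Z * g) ω ∂μ ≤ ∫ ω, Z ω ∂μ := by
  have hpull := condExp_mul_of_stronglyMeasurable_left hZ hZg hg
  calc ∫ ω, (Z * g) ω ∂μ = ∫ ω, (μ[Z * g|G]) ω ∂μ := (integral_condExp hG).symm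
    _ = ∫ ω, (Z * μ[g|G]) ω ∂μ := integral_congr_ae hpull
    _ ≤ ∫ ω, Z ω ∂μ := by
      refine integral_mono_ae (integrable_condExp.congr hpull) hZi ?_
      filter_upwards [hZ0, hcond] with ω h0 h1
      simpa using mul_le_mul_of_nonneg_left h1 h0

end Conditional

section SampledMean

variable {Ω : Type*} {m0 : MeasurableSpace Ω} {μ : Measure Ω}

structure IsBoundedMartingaleDiff (X : ℕ → Ω → ℝ) (a b : ℝ) (F : Filtration ℕ m0)
    (μ : Measure Ω) : Prop where
  stronglyMeasurable : ∀ s, StronglyMeasurable[F (s + 1)] (X s)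
  integrable : ∀ s, Integrable (X s) μ
  condExp_eq_zero : ∀ s, μ[X s|F s] =ᵐ[μ] 0
  mem_Icc : ∀ s, ∀ᵐ ω ∂μ, X s ω ∈ Set.Icc a b

-- `ι s = 1` when the increment `X s` is sampled: `sampleCount ι t` is `N_t`, and the empirical
-- mean `μ̂_t` is `sampledSum ι X t / sampleCount ι t`.
def sampledSum (ι X : ℕ → Ω → ℝ) (t : ℕ) (ω : Ω) : ℝ := ∑ s ∈ range t, ι s ω * X s ω

def sampleCount (ι : ℕ → Ω → ℝ) (t : ℕ) (ω : Ω) : ℝ := ∑ s ∈ range t, ι s ω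

namespace IsBoundedMartingaleDiff

variable {F : Filtration ℕ m0} {X ι : ℕ → Ω → ℝ} {a b : ℝ}

lemma sub_condExp [IsFiniteMeasure μ] {Y : ℕ → Ω → ℝ}
    (hY : ∀ s, StronglyMeasurable[F (s + 1)] (Y s))
    (hY_int : ∀ s, Integrable (Y s) μ)
    (hYab : ∀ s, ∀ᵐ ω ∂μ, Y s ω - (μ[Y s|F s]) ω ∈ Set.Icc a b) :
    IsBoundedMartingaleDiff (fun s => Y s - μ[Y s|F s]) a b F μ where
  stronglyMeasurable s :=
    (hY s).sub (stronglyMeasurable_condExp.mono (F.mono (Nat.le_succ s)))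
  integrable s := (hY_int s).sub integrable_condExp
  condExp_eq_zero s := by
    have hsub : μ[Y s - μ[Y s|F s]|F s] =ᵐ[μ] μ[Y s|F s] - μ[μ[Y s|F s]|F s] :=
      condExp_sub (hY_int s) integrable_condExp (F s)
    filter_upwards [hsub, condExp_condExp_of_le (le_refl (F s)) (F.le s) (f := Y s) (μ := μ)]
      with ω h1 h2
    simp [h1, h2]
  mem_Icc := hYab

lemma neg (hX : IsBoundedMartingaleDiff X a b F μ) :
    IsBoundedMartingaleDiff (fun s => -X s) (-b) (-a) F μ where
  stronglyMeasurable s := (hX.stronglyMeasurable s).neg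
  integrable s := (hX.integrable s).neg
  condExp_eq_zero s := by
    filter_upwards [condExp_neg (X s) (F s), hX.condExp_eq_zero s] with ω h1 h2
    simp [h1, h2]
  mem_Icc s := by
    filter_upwards [hX.mem_Icc s] with ω h
    exact ⟨neg_le_neg h.2, neg_le_neg h.1⟩

lemma ae_exp_sampled_le (hX : IsBoundedMartingaleDiff X a b F μ)
    (hι01 : ∀ s ω, ι s ω = 0 ∨ ι s ω = 1) {c : ℝ} (hc : 0 ≤ c) (l : ℝ) (s : ℕ) :
    ∀ᵐ ω ∂μ, exp (ι s ω * (l * X s ω - c)) ≤ exp (|l| * max |a| |b|) := by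
  filter_upwards [hX.mem_Icc s] with ω hω
  have hlX : l * X s ω ≤ |l| * max |a| |b| := calc
    l * X s ω ≤ |l| * |X s ω| := abs_mul l (X s ω) ▸ le_abs_self _
    _ ≤ |l| * max |a| |b| := by gcongr; exact abs_le_max_abs_abs hω.1 hω.2
  rw [exp_le_exp]
  rcases hι01 s ω with h | h <;> simp only [h, zero_mul, one_mul]
  · positivity
  · linarith

variable [IsProbabilityMeasure μ]

lemma le_zero_and_zero_le (hX : IsBoundedMartingaleDiff X a b F μ) : a ≤ 0 ∧ 0 ≤ b :=
  zero_mem_Icc_of_condExp_eq_zero (F.le 0) (hX.integrable 0) (hX.condExp_eq_zero 0)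
    (hX.mem_Icc 0)

lemma condExp_exp_sampled_le_one (hX : IsBoundedMartingaleDiff X a b F μ) (hab : a < b)
    (hι : ∀ s, StronglyMeasurable[F s] (ι s)) (hι01 : ∀ s ω, ι s ω = 0 ∨ ι s ω = 1)
    (l : ℝ) (s : ℕ) :
    μ[fun ω => exp (ι s ω * (l * X s ω - l ^ 2 * (b - a) ^ 2 / 8))|F s] ≤ᵐ[μ] 1 := by
  refine condExp_exp_mul_le_one_of_eq_zero_or_one (F.le s) (hι s) (hι01 s) ?_
    (condExp_exp_mul_sub_le_one_s7 (F.le s) hab (hX.integrable s) (hX.condExp_eq_zero s)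
      (hX.mem_Icc s) l)
  simpa only [sub_eq_add_neg, exp_add] using (integrable_exp_mul_of_mem_Icc
    (hX.integrable s).aemeasurable (hX.mem_Icc s)).mul_const _

lemma integrable_exp_sampledSum_and_integral_le_one (hX : IsBoundedMartingaleDiff X a b F μ)
    (hab : a < b) (hι : ∀ s, StronglyMeasurable[F s] (ι s))
    (hι01 : ∀ s ω, ι s ω = 0 ∨ ι s ω = 1) (l : ℝ) (t : ℕ) :
    Integrable (fun ω => exp (l * sampledSum ι X t ω
      - l ^ 2 * (b - a) ^ 2 / 8 * sampleCount ι t ω)) μ ∧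
    ∫ ω, exp (l * sampledSum ι X t ω - l ^ 2 * (b - a) ^ 2 / 8 * sampleCount ι t ω) ∂μ ≤ 1 := by
  set c := l ^ 2 * (b - a) ^ 2 / 8
  set g : ℕ → Ω → ℝ := fun s ω => exp (ι s ω * (l * X s ω - c))
  have hW : ∀ t, (fun ω => exp (l * sampledSum ι X t ω - c * sampleCount ι t ω))
      = ∏ s ∈ range t, g s := fun t => by
    ext ω
    simp only [sampledSum, sampleCount, prod_apply, g, ← exp_sum, mul_sum, ← sum_sub_distrib]
    exact congrArg exp (sum_congr rfl fun s _ => by ring)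
  have hg_meas : ∀ s, StronglyMeasurable[F (s + 1)] (g s) := fun s =>
    continuous_exp.comp_stronglyMeasurable (((hι s).mono (F.mono (Nat.le_succ s))).mul
      (((hX.stronglyMeasurable s).const_mul l).sub stronglyMeasurable_const))
  have hg_bdd : ∀ s, ∀ᵐ ω ∂μ, ‖g s ω‖ ≤ exp (|l| * max |a| |b|) := fun s => by
    filter_upwards [hX.ae_exp_sampled_le hι01 (show 0 ≤ c by positivity) l s] with ω hω
    rwa [norm_of_nonneg (exp_pos _).le]
  rw [hW]
  induction t with
  | zero => exact ⟨integrable_const 1, by simp [Pi.one_def]⟩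
  | succ t ih =>
    obtain ⟨hint, hle⟩ := ih
    have hW_meas : StronglyMeasurable[F t] (∏ s ∈ range t, g s) :=
      Finset.stronglyMeasurable_prod _ fun s hs => (hg_meas s).mono (F.mono (mem_range.1 hs))
    have hg_int : Integrable (g t) μ :=
      .of_bound ((hg_meas t).mono (F.le _)).aestronglyMeasurable _ (hg_bdd t)
    have hWg_int : Integrable ((∏ s ∈ range t, g s) * g t) μ :=
      hint.mul_bdd ((hg_meas t).mono (F.le _)).aestronglyMeasurable (hg_bdd t)
    have hW_nonneg : 0 ≤ᵐ[μ] ∏ s ∈ range t, g s :=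
      ae_of_all _ fun ω => by simp only [prod_apply, Pi.zero_apply, g]; positivity
    rw [prod_range_succ]
    exact ⟨hWg_int, (integral_mul_le_of_condExp_le_one (F.le t) hW_meas hW_nonneg hint hg_int
      hWg_int (hX.condExp_exp_sampled_le_one hab hι hι01 l t)).trans hle⟩

lemma measure_sampleCount_eq_and_lt_sampledSum_le (hX : IsBoundedMartingaleDiff X a b F μ)
    (hab : a < b) (hι : ∀ s, StronglyMeasurable[F s] (ι s))
    (hι01 : ∀ s ω, ι s ω = 0 ∨ ι s ω = 1) (t : ℕ) {k : ℕ} (hk : 0 < k) {c : ℝ} (hc : 0 ≤ c) :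
    μ {ω | sampleCount ι t ω = k ∧ c < sampledSum ι X t ω}
      ≤ ENNReal.ofReal (exp (-2 * c ^ 2 / (k * (b - a) ^ 2))) := by
  -- this `l` minimises the Chernoff exponent `-l c + l² k (b - a)² / 8`
  set l := 4 * c / (k * (b - a) ^ 2)
  set Z : Ω → ℝ := fun ω => sampledSum ι X t ω - l * (b - a) ^ 2 / 8 * sampleCount ι t ω
  have hZ : (fun ω => exp (l * Z ω)) = fun ω => exp (l * sampledSum ι X t ω
      - l ^ 2 * (b - a) ^ 2 / 8 * sampleCount ι t ω) := by
    ext ω; simp only [Z]; congr 1; ring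
  obtain ⟨hint, hle⟩ := hX.integrable_exp_sampledSum_and_integral_le_one hab hι hι01 l t
  have hsub : {ω | sampleCount ι t ω = k ∧ c < sampledSum ι X t ω}
      ⊆ {ω | c - l * (b - a) ^ 2 / 8 * k ≤ Z ω} := by
    rintro ω ⟨hN, hS⟩
    simp only [Set.mem_ofPred_eq, Z, hN]
    linarith
  rw [ENNReal.le_ofReal_iff_toReal_le (measure_ne_top _ _) (exp_pos _).le]
  calc μ.real {ω | sampleCount ι t ω = k ∧ c < sampledSum ι X t ω}
      ≤ μ.real {ω | c - l * (b - a) ^ 2 / 8 * k ≤ Z ω} := measureReal_mono hsub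
    _ ≤ exp (-l * (c - l * (b - a) ^ 2 / 8 * k)) * mgf Z μ l :=
      measure_ge_le_exp_mul_mgf _ (by positivity) (hZ ▸ hint)
    _ ≤ exp (-l * (c - l * (b - a) ^ 2 / 8 * k)) * 1 := by
      gcongr
      rw [mgf, hZ]
      exact hle
    _ = exp (-2 * c ^ 2 / (k * (b - a) ^ 2)) := by
      have hba : b - a ≠ 0 := (sub_pos.2 hab).ne'
      have hk0 : (k : ℝ) ≠ 0 := Nat.cast_ne_zero.2 hk.ne'
      rw [mul_one]; congr 1; simp only [l]; field_simp; ring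

lemma measure_sampleCount_eq_and_lt_sampledSum_le_ofReal
    (hX : IsBoundedMartingaleDiff X a b F μ) (hι : ∀ s, StronglyMeasurable[F s] (ι s))
    (hι01 : ∀ s ω, ι s ω = 0 ∨ ι s ω = 1) (t : ℕ) {k : ℕ} (hk : 0 < k) {α : ℝ} (hα0 : 0 < α)
    (hα1 : α ≤ 1) :
    μ {ω | sampleCount ι t ω = k ∧ (b - a) * √(k * log (1 / α) / 2) < sampledSum ι X t ω}
      ≤ ENNReal.ofReal α := by
  obtain ⟨ha, hb⟩ := hX.le_zero_and_zero_le
  rcases (ha.trans hb).eq_or_lt with hab | hab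
  -- for `a = b` the threshold is `0`, out of Chernoff's reach, but the increments vanish a.e.
  · have hS : ∀ᵐ ω ∂μ, sampledSum ι X t ω = 0 := by
      filter_upwards [ae_all_iff.2 hX.mem_Icc] with ω hω
      refine sum_eq_zero fun s _ => ?_
      have : X s ω = 0 := by linarith [(hω s).1, (hω s).2]
      simp [this]
    refine (measure_mono_null (fun ω hω => ?_) (ae_iff.1 hS)).trans_le zero_le
    rw [Set.mem_ofPred_eq, hab, sub_self, zero_mul] at hω
    exact hω.2.ne'
  · have hL : 0 ≤ log (1 / α) := log_nonneg ((one_le_div hα0).2 hα1)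
    refine (hX.measure_sampleCount_eq_and_lt_sampledSum_le hab hι hι01 t hk
      (by have := sub_pos.2 hab; positivity)).trans_eq ?_
    have hk' : (0 : ℝ) < k := Nat.cast_pos.2 hk
    rw [mul_pow, sq_sqrt (by positivity)]
    congr 1
    rw [show -2 * ((b - a) ^ 2 * (k * log (1 / α) / 2)) / (k * (b - a) ^ 2) = -log (1 / α) by
      field_simp [(sub_pos.2 hab).ne']]
    rw [exp_neg, exp_log (by positivity)]
    simp

end IsBoundedMartingaleDiff

lemma exists_sampleCount_eq {ι : ℕ → Ω → ℝ} (hι01 : ∀ s ω, ι s ω = 0 ∨ ι s ω = 1) (t : ℕ)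
    (ω : Ω) : ∃ k ≤ t, sampleCount ι t ω = k := by
  induction t with
  | zero => exact ⟨0, le_rfl, by simp [sampleCount]⟩
  | succ t ih =>
    obtain ⟨k, hkt, hk⟩ := ih
    simp only [sampleCount, sum_range_succ] at hk ⊢
    rcases hι01 t ω with h | h
    · exact ⟨k, by omega, by simp [hk, h]⟩
    · exact ⟨k + 1, by omega, by simp [hk, h]⟩

lemma sampledSum_neg (ι X : ℕ → Ω → ℝ) (t : ℕ) (ω : Ω) :
    sampledSum ι (fun s => -X s) t ω = -sampledSum ι X t ω := by
  simp [sampledSum]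

lemma compl_subset_biUnion_sampleCount_eq {ι X : ℕ → Ω → ℝ}
    (hι01 : ∀ s ω, ι s ω = 0 ∨ ι s ω = 1) (t : ℕ) (σ L : ℝ) :
    {ω | sampleCount ι t ω = 0 ∨ |sampledSum ι X t ω / sampleCount ι t ω|
        ≤ σ * √(L / (2 * sampleCount ι t ω))}ᶜ
      ⊆ ⋃ k ∈ Icc 1 t, ({ω | sampleCount ι t ω = k ∧ σ * √(k * L / 2) < sampledSum ι X t ω}
        ∪ {ω | sampleCount ι t ω = k ∧ σ * √(k * L / 2) < sampledSum ι (fun s => -X s) t ω}) := by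
  intro ω hω
  simp only [Set.mem_compl_iff, Set.mem_ofPred_eq, not_or, not_le] at hω
  obtain ⟨hN0, hdev⟩ := hω
  obtain ⟨k, hkt, hk⟩ := exists_sampleCount_eq hι01 t ω
  rw [hk] at hN0 hdev
  have hk0 : (0 : ℝ) < k := lt_of_le_of_ne k.cast_nonneg (Ne.symm hN0)
  have hsqrt : √(k * L / 2) = k * √(L / (2 * k)) := by
    rw [show (k : ℝ) * L / 2 = k ^ 2 * (L / (2 * k)) by field_simp,
      sqrt_mul (sq_nonneg _), sqrt_sq hk0.le]
  have habs : σ * √(k * L / 2) < |sampledSum ι X t ω| := by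
    rw [abs_div, abs_of_pos hk0, lt_div_iff₀ hk0] at hdev
    rw [hsqrt]; linarith
  simp only [Set.mem_iUnion, Set.mem_union, Set.mem_ofPred_eq, sampledSum_neg, mem_Icc]
  exact ⟨k, ⟨Nat.one_le_iff_ne_zero.2 (by rintro rfl; simp at hN0), hkt⟩,
    (lt_abs.1 habs).imp (⟨hk, ·⟩) (⟨hk, ·⟩)⟩

theorem IsBoundedMartingaleDiff.measure_abs_sampledMean_le [IsProbabilityMeasure μ]
    {F : Filtration ℕ m0} {X ι : ℕ → Ω → ℝ} {a b : ℝ} (hX : IsBoundedMartingaleDiff X a b F μ)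
    (hι : ∀ s, StronglyMeasurable[F s] (ι s)) (hι01 : ∀ s ω, ι s ω = 0 ∨ ι s ω = 1) (t : ℕ)
    {α : ℝ} (hα0 : 0 < α) (hα1 : α ≤ 1) :
    1 - ENNReal.ofReal (2 * t * α) ≤ μ {ω | sampleCount ι t ω = 0
      ∨ |sampledSum ι X t ω / sampleCount ι t ω|
        ≤ (b - a) * √(log (1 / α) / (2 * sampleCount ι t ω))} := by
  set E := {ω | sampleCount ι t ω = 0 ∨ |sampledSum ι X t ω / sampleCount ι t ω|
        ≤ (b - a) * √(log (1 / α) / (2 * sampleCount ι t ω))}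
  have hEc : μ Eᶜ ≤ ENNReal.ofReal (2 * t * α) := calc
    μ Eᶜ ≤ ∑ k ∈ Icc 1 t, (ENNReal.ofReal α + ENNReal.ofReal α) := by
      refine (measure_mono (compl_subset_biUnion_sampleCount_eq hι01 t _ _)).trans
        ((measure_biUnion_finset_le _ _).trans (sum_le_sum fun k hk => ?_))
      have hk : 0 < k := (Finset.mem_Icc.1 hk).1
      refine (measure_union_le _ _).trans (add_le_add ?_ ?_)
      · exact hX.measure_sampleCount_eq_and_lt_sampledSum_le_ofReal hι hι01 t hk hα0 hα1
      · simpa only [neg_sub_neg] using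
          hX.neg.measure_sampleCount_eq_and_lt_sampledSum_le_ofReal hι hι01 t hk hα0 hα1
    _ = ENNReal.ofReal (2 * t * α) := by
      rw [sum_const, Nat.card_Icc, Nat.add_sub_cancel, nsmul_eq_mul,
        ← ENNReal.ofReal_add hα0.le hα0.le, ← ENNReal.ofReal_natCast t,
        ← ENNReal.ofReal_mul (by positivity)]
      ring_nf
  calc 1 - ENNReal.ofReal (2 * t * α) ≤ 1 - μ Eᶜ := tsub_le_tsub_left hEc 1
    _ ≤ μ E := by
      rw [tsub_le_iff_right, ← measure_univ (μ := μ)]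
      exact measure_univ_le_add_compl E

end SampledMean

/-- Anytime Hoeffding bound for the optionally-sampled empirical mean: with probability at
least `1 - 2tα`, either no samples were collected or
`|μ̂_t| ≤ (M - m)√(log(1/α)/(2 N_t))`. -/
theorem stmt7 {Ω : Type*} {m0 : MeasurableSpace Ω} (μ : Measure Ω) [IsProbabilityMeasure μ]
    (F : Filtration ℕ m0) (y ι : ℕ → Ω → ℝ) (m M : ℝ)
    (hy_adapted : ∀ s : ℕ, StronglyMeasurable[F (s + 1)] (y (s + 1)))
    (hy_int : ∀ s : ℕ, Integrable (y s) μ)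
    (hbound : ∀ s : ℕ, ∀ᵐ ω ∂μ,
      y (s + 1) ω - (μ[y (s + 1)|F s]) ω ∈ Set.Icc m M)
    (hι_meas : ∀ s : ℕ, StronglyMeasurable[F s] (ι (s + 1)))
    (hι_01 : ∀ (s : ℕ) (ω : Ω), ι (s + 1) ω = 0 ∨ ι (s + 1) ω = 1)
    (t : ℕ) (α : ℝ) (hα : α ∈ Set.Ioo (0 : ℝ) 1) :
    1 - ENNReal.ofReal (2 * t * α)
      ≤ μ {ω | (∑ s ∈ Finset.range t, ι (s + 1) ω) = 0
          ∨ |(∑ s ∈ Finset.range t, ι (s + 1) ω * (y (s + 1) ω - (μ[y (s + 1)|F s]) ω))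
              / (∑ s ∈ Finset.range t, ι (s + 1) ω)|
            ≤ (M - m) * Real.sqrt (Real.log (1 / α)
                / (2 * (∑ s ∈ Finset.range t, ι (s + 1) ω)))} :=
  (IsBoundedMartingaleDiff.sub_condExp hy_adapted (fun s => hy_int (s + 1)) hbound
    ).measure_abs_sampledMean_le hι_meas hι_01 t hα.1 hα.2.le
end
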